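/- arXiv:2303.15362 — 7 statements merged into one kernel-verified Lean document; each statement's English description precedes it below -/
import Mathlib

section
/- Let G be a graph in standard Cohen–Macaulay very well-covered form on the vertex set {x_1,…,x_n,y_1,…,y_n}. Then for every subset A ⊆ [n], the induced subgraph G' = G ∖ {x_i, y_i : i ∈ A} (obtained by deleting all vertices x_i, y_i with i ∈ A together with their incident edges) has no isolated vertices, the set {x_i : i ∈ [n]∖A} is a minimal vertex cover of G', the set {y_i : i ∈ [n]∖A} is a maximal independent set of G', and G' again satisfies conditions (i)–(v) with respect to the inherited labelling; in particular G' is a Cohen–Macaulay very well-covered graph on 2(n−|A|) vertices. -/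
/-- `C` is a vertex cover of the graph `G`. -/
def IsVertexCover {V : Type*} (G : SimpleGraph V) (C : Finset V) : Prop :=
  ∀ ⦃v w : V⦄, G.Adj v w → v ∈ C ∨ w ∈ C

/-- `C` is a minimal vertex cover of the graph `G`. -/
def IsMinVertexCover {V : Type*} (G : SimpleGraph V) (C : Finset V) : Prop :=
  IsVertexCover G C ∧ ∀ D ⊆ C, IsVertexCover G D → D = C

/-- `C` is an independent set of the graph `G`. -/
def IsIndepSet {V : Type*} (G : SimpleGraph V) (C : Finset V) : Prop :=
  ∀ ⦃v w : V⦄, v ∈ C → w ∈ C → ¬ G.Adj v w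

/-- `C` is a maximal independent set of the graph `G`. -/
def IsMaxIndepSet {V : Type*} (G : SimpleGraph V) (C : Finset V) : Prop :=
  IsIndepSet G C ∧ ∀ D, C ⊆ D → IsIndepSet G D → D = C

/-- A graph on the vertex set `{x_i, y_i : i ∈ ι}` (with `x_i = Sum.inl i` and
`y_i = Sum.inr i`) is in standard Cohen–Macaulay very well-covered form if it satisfies
conditions (i)–(v) of the Crupi–Rinaldo–Terai characterization. -/
def StdCMVWC {ι : Type*} [LinearOrder ι] [Fintype ι] (G : SimpleGraph (ι ⊕ ι)) : Prop :=
  IsMinVertexCover G (Finset.univ.image Sum.inl) ∧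
  IsMaxIndepSet G (Finset.univ.image Sum.inr) ∧
  (∀ i : ι, G.Adj (Sum.inl i) (Sum.inr i)) ∧
  (∀ i j : ι, G.Adj (Sum.inl i) (Sum.inr j) → i ≤ j) ∧
  (∀ i j : ι, G.Adj (Sum.inl i) (Sum.inr j) → ¬ G.Adj (Sum.inl i) (Sum.inl j)) ∧
  (∀ (i j k : ι) (z : ι ⊕ ι), (z = Sum.inl i ∨ z = Sum.inr i) →
    i ≠ j → j ≠ k → i ≠ k →
    G.Adj z (Sum.inl j) → G.Adj (Sum.inr j) (Sum.inl k) → G.Adj z (Sum.inl k))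

/-- Deleting the pairs `x_i, y_i` for `i ∈ A` from a graph in standard CM very
well-covered form yields a graph (on the remaining `2(n - |A|)` vertices, with the
inherited labelling) that has no isolated vertices and is again in standard CM very
well-covered form; in particular the surviving `x`'s form a minimal vertex cover and the
surviving `y`'s a maximal independent set. -/
theorem stmt0 (n : ℕ) (G : SimpleGraph (Fin (n + 1) ⊕ Fin (n + 1))) (hG : StdCMVWC G)
    (A : Finset (Fin (n + 1))) :
    (∀ v : {i : Fin (n + 1) // i ∉ A} ⊕ {i : Fin (n + 1) // i ∉ A},
        ∃ w, (G.comap (Sum.map Subtype.val Subtype.val)).Adj v w) ∧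
    StdCMVWC (G.comap (Sum.map Subtype.val Subtype.val) :
        SimpleGraph ({i : Fin (n + 1) // i ∉ A} ⊕ {i : Fin (n + 1) // i ∉ A})) ∧
    Fintype.card ({i : Fin (n + 1) // i ∉ A} ⊕ {i : Fin (n + 1) // i ∉ A})
      = 2 * (n + 1 - A.card) := by
  obtain ⟨⟨hXc, hXm⟩, ⟨hYi, hYm⟩, hmatch, hle, hnadj, htrans⟩ := hG
  refine ⟨?_, ⟨⟨?_, ?_⟩, ⟨?_, ?_⟩, ?_, ?_, ?_, ?_⟩, ?_⟩
  · rintro (i | i)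
    · exact ⟨Sum.inr i, by simpa using hmatch i.1⟩
    · exact ⟨Sum.inl i, by simpa using (hmatch i.1).symm⟩
  · rintro (a | a) (b | b) h
    · left; simp
    · left; simp
    · right; simp
    · exfalso
      simp only [SimpleGraph.comap_adj, Sum.map_inr] at h
      rcases hXc h with h' | h' <;> simp at h'
  · intro D hD hDc
    refine Finset.Subset.antisymm hD ?_
    intro v hv
    simp only [Finset.mem_image, Finset.mem_univ, true_and] at hv
    obtain ⟨a, rfl⟩ := hv
    have hedge : (G.comap (Sum.map Subtype.val Subtype.val)).Adj (Sum.inl a) (Sum.inr a) := by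
      simpa using hmatch a.1
    rcases hDc hedge with h' | h'
    · exact h'
    · have := hD h'
      simp at this
  · intro v w hv hw hadj
    simp only [Finset.mem_image, Finset.mem_univ, true_and] at hv hw
    obtain ⟨a, rfl⟩ := hv
    obtain ⟨b, rfl⟩ := hw
    simp only [SimpleGraph.comap_adj, Sum.map_inr] at hadj
    exact hYi (by simp) (by simp) hadj
  · intro D hD hDi
    refine Finset.Subset.antisymm ?_ hD
    rintro (a | a) hv
    · exfalso
      have hedge : (G.comap (Sum.map Subtype.val Subtype.val)).Adj (Sum.inl a) (Sum.inr a) := by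
        simpa using hmatch a.1
      exact hDi hv (hD (by simp)) hedge
    · simp
  · intro i
    simpa using hmatch i.1
  · intro i j h
    simp only [SimpleGraph.comap_adj, Sum.map_inl, Sum.map_inr] at h
    exact Subtype.coe_le_coe.mp (hle _ _ h)
  · intro i j h h'
    simp only [SimpleGraph.comap_adj, Sum.map_inl, Sum.map_inr] at h h'
    exact hnadj _ _ h h'
  · intro i j k z hz hij hjk hik hzj hjk'
    simp only [SimpleGraph.comap_adj, Sum.map_inl, Sum.map_inr] at hzj hjk' ⊢
    refine htrans i.1 j.1 k.1 (Sum.map Subtype.val Subtype.val z) ?_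
      (Subtype.coe_injective.ne hij) (Subtype.coe_injective.ne hjk)
      (Subtype.coe_injective.ne hik) hzj hjk'
    rcases hz with rfl | rfl
    · left; rfl
    · right; rfl
  · rw [Fintype.card_sum, Fintype.card_subtype_compl, Fintype.card_fin]
    have : Fintype.card {x : Fin (n+1) // x ∈ A} = A.card := Fintype.card_coe A
    rw [this]
    ring
end

section
/- Let G be a graph in standard Cohen–Macaulay very well-covered form on {x_1,…,x_n,y_1,…,y_n}, and let G_1, G_2 be as defined. Then: (a) a subset C of the vertices with y_n ∈ C is a minimal vertex cover of G if and only if {x_{i_1},…,x_{i_t}} ⊆ C and C ∖ ({x_{i_1},…,x_{i_t}} ∪ {y_n}) is a minimal vertex cover of G_1; and (b) a subset C of the vertices with x_n ∈ C is a minimal vertex cover of G if and only if {x_{j_1},…,x_{j_p}} ⊆ C and C ∖ ({x_{j_1},…,x_{j_p}} ∪ {x_n}) is a minimal vertex cover of G_2. Moreover every minimal vertex cover of G contains exactly one of x_n and y_n, so these two families partition the set of minimal vertex covers of G. -/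
/-- The subgraph of `G` obtained by deleting all vertices outside `S` (together with
their incident edges), viewed as a graph on the same vertex set. -/
def restrictG {V : Type*} (G : SimpleGraph V) (S : Set V) : SimpleGraph V where
  Adj v w := G.Adj v w ∧ v ∈ S ∧ w ∈ S
  symm := ⟨fun v w ⟨h, hv, hw⟩ => ⟨h.symm, hw, hv⟩⟩
  loopless := ⟨fun v h => G.irrefl h.1⟩

/-- The vertex `x_n`. -/
def xnV (n : ℕ) : Fin (n + 1) ⊕ Fin (n + 1) := Sum.inl (Fin.last n)

/-- The vertex `y_n`. -/
def ynV (n : ℕ) : Fin (n + 1) ⊕ Fin (n + 1) := Sum.inr (Fin.last n)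

/-- The indices `i` with `x_i ∈ N(x_n)`, i.e. `N(x_n) ∖ {y_n} = {x_{i_1},…,x_{i_t}}`. -/
def nbrX (n : ℕ) (G : SimpleGraph (Fin (n + 1) ⊕ Fin (n + 1))) [DecidableRel G.Adj] :
    Finset (Fin (n + 1)) :=
  Finset.univ.filter fun i => G.Adj (Sum.inl i) (xnV n)

/-- The indices `i` with `x_i ∈ N(y_n)`, i.e. `N(y_n) ∖ {x_n} = {x_{j_1},…,x_{j_p}}`. -/
def nbrY (n : ℕ) (G : SimpleGraph (Fin (n + 1) ⊕ Fin (n + 1))) [DecidableRel G.Adj] :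
    Finset (Fin (n + 1)) :=
  Finset.univ.filter fun i => G.Adj (Sum.inl i) (ynV n)

/-- `G_1 = G ∖ {x_{i_1},y_{i_1},…,x_{i_t},y_{i_t},x_n,y_n}`. -/
def G₁ (n : ℕ) (G : SimpleGraph (Fin (n + 1) ⊕ Fin (n + 1))) [DecidableRel G.Adj] :
    SimpleGraph (Fin (n + 1) ⊕ Fin (n + 1)) :=
  restrictG G {v | Sum.elim id id v ∉ nbrX n G ∧ Sum.elim id id v ≠ Fin.last n}

/-- `G_2 = G ∖ {x_{j_1},y_{j_1},…,x_{j_p},y_{j_p},x_n,y_n}`. -/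
def G₂ (n : ℕ) (G : SimpleGraph (Fin (n + 1) ⊕ Fin (n + 1))) [DecidableRel G.Adj] :
    SimpleGraph (Fin (n + 1) ⊕ Fin (n + 1)) :=
  restrictG G {v | Sum.elim id id v ∉ nbrY n G ∧ Sum.elim id id v ≠ Fin.last n}

/-- `G_3 = G ∖ {x_i, y_i : x_i ∈ N[x_n] ∪ N[y_n]}`, the induced subgraph `G_1 ∩ G_2`. -/
def G₃ (n : ℕ) (G : SimpleGraph (Fin (n + 1) ⊕ Fin (n + 1))) [DecidableRel G.Adj] :
    SimpleGraph (Fin (n + 1) ⊕ Fin (n + 1)) :=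
  restrictG G {v | Sum.elim id id v ∉ nbrX n G ∧ Sum.elim id id v ∉ nbrY n G ∧
    Sum.elim id id v ≠ Fin.last n}

/-! Let `u ∈ {x_n, y_n}` be the vertex that a minimal vertex cover `C` omits (the conditions
force it to omit exactly one of them). Then `C` contains all neighbours of `u`, and condition
(v) shows that the neighbours of every `y_i` with `x_i ∈ N(u)` again lie in `N(u)`. Hence every
edge leaving the vertex set of `G_1` (resp. `G_2`) meets `N(u)`, and deleting `N(u)` is a
bijection between the minimal vertex covers of `G` omitting `u` and those of `G_1` (resp.
`G_2`). -/

section VertexCover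

variable {V : Type*} {G : SimpleGraph V}

theorem IsVertexCover.mem_of_adj_of_notMem {C : Finset V} (hC : IsVertexCover G C) {u v : V}
    (hu : u ∉ C) (h : G.Adj u v) : v ∈ C :=
  (hC h).resolve_left hu

theorem IsMinVertexCover.exists_adj_notMem {C : Finset V} (hC : IsMinVertexCover G C) {p : V}
    (hp : p ∈ C) : ∃ w, G.Adj p w ∧ w ∉ C := by
  classical
  by_contra! h
  have hcover : ∀ a b, G.Adj a b → a ∈ C → a ∈ C.erase p ∨ b ∈ C.erase p := by
    intro a b hab ha
    by_cases hap : a = p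
    · subst hap
      exact Or.inr (Finset.mem_erase.2 ⟨hab.ne.symm, h b hab⟩)
    · exact Or.inl (Finset.mem_erase.2 ⟨hap, ha⟩)
  have herase : C.erase p = C := hC.2 _ (Finset.erase_subset p C) fun a b hab =>
    (hC.1 hab).elim (hcover a b hab) fun hb => (hcover b a hab.symm hb).symm
  exact Finset.notMem_erase p C (by rw [herase]; exact hp)

theorem IsMinVertexCover.mem_of_restrictG {S : Set V} {C : Finset V}
    (hC : IsMinVertexCover (restrictG G S) C) {v : V} (hv : v ∈ C) : v ∈ S :=
  let ⟨_, hadj, _⟩ := hC.exists_adj_notMem hv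
  hadj.2.1

variable [DecidableEq V] {S : Set V} {R : Finset V}

theorem IsVertexCover.sdiff_restrictG {D : Finset V} (hD : IsVertexCover G D)
    (hSR : ∀ v ∈ S, v ∉ R) : IsVertexCover (restrictG G S) (D \ R) := by
  rintro v w ⟨hadj, hv, hw⟩
  exact (hD hadj).imp (fun h => Finset.mem_sdiff.2 ⟨h, hSR v hv⟩)
    (fun h => Finset.mem_sdiff.2 ⟨h, hSR w hw⟩)

theorem IsVertexCover.union_of_restrictG {D : Finset V}
    (hD : IsVertexCover (restrictG G S) D)
    (hcov : ∀ v w, G.Adj v w → v ∉ S → v ∈ R ∨ w ∈ R) :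
    IsVertexCover G (D ∪ R) := by
  intro v w hadj
  by_cases hv : v ∈ S
  · by_cases hw : w ∈ S
    · exact (hD ⟨hadj, hv, hw⟩).imp (Finset.mem_union_left R) (Finset.mem_union_left R)
    · exact ((hcov w v hadj.symm hw).imp (Finset.mem_union_right D)
        (Finset.mem_union_right D)).symm
  · exact (hcov v w hadj hv).imp (Finset.mem_union_right D) (Finset.mem_union_right D)

/-- Since `R ⊆ N(u)` and `u ∉ C`, every vertex cover of `G` inside `C` contains `R`. -/
theorem isMinVertexCover_iff_restrictG_sdiff {C : Finset V} {u : V} (hR : ∀ r ∈ R, G.Adj u r)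
    (hSR : ∀ v ∈ S, v ∉ R) (hcov : ∀ v w, G.Adj v w → v ∉ S → v ∈ R ∨ w ∈ R)
    (hRC : R ⊆ C) (hu : u ∉ C) :
    IsMinVertexCover G C ↔ IsMinVertexCover (restrictG G S) (C \ R) := by
  constructor
  · intro hC
    refine ⟨hC.1.sdiff_restrictG hSR, fun D hD hDcov => ?_⟩
    have hDR : D ∪ R = C := hC.2 _ (Finset.union_subset (hD.trans Finset.sdiff_subset) hRC)
      (hDcov.union_of_restrictG hcov)
    refine hD.antisymm ?_
    calc C \ R = (D ∪ R) \ R := by rw [hDR]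
      _ = D \ R := Finset.union_sdiff_right D R
      _ ⊆ D := Finset.sdiff_subset
  · intro hC
    have hCR : C \ R ∪ R = C := Finset.sdiff_union_of_subset hRC
    refine ⟨hCR ▸ hC.1.union_of_restrictG hcov, fun D hD hDcov => ?_⟩
    have hRD : R ⊆ D := fun r hr => hDcov.mem_of_adj_of_notMem (fun h => hu (hD h)) (hR r hr)
    have hDR : D \ R = C \ R :=
      hC.2 _ (Finset.sdiff_subset_sdiff hD subset_rfl) (hDcov.sdiff_restrictG hSR)
    rw [← Finset.sdiff_union_of_subset hRD, hDR, hCR]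

theorem isMinVertexCover_iff_restrictG_of_adj {C N : Finset V} {u w : V} (huw : G.Adj u w)
    (hN : ∀ v ∈ N, G.Adj u v) (huS : u ∉ S) (hSR : ∀ v ∈ S, v ∉ insert w N)
    (hcov : ∀ v v', G.Adj v v' → v ∉ S → v ∈ insert w N ∨ v' ∈ insert w N)
    (hsplit : IsMinVertexCover G C → u ∉ C) (hwC : w ∈ C) :
    IsMinVertexCover G C ↔ N ⊆ C ∧ IsMinVertexCover (restrictG G S) (C \ insert w N) := by
  have hR : ∀ r ∈ insert w N, G.Adj u r := (Finset.forall_mem_insert _ _ _).2 ⟨huw, hN⟩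
  constructor
  · intro hC
    have hu := hsplit hC
    have hNC : N ⊆ C := fun v hv => hC.1.mem_of_adj_of_notMem hu (hN v hv)
    exact ⟨hNC, (isMinVertexCover_iff_restrictG_sdiff hR hSR hcov
      (Finset.insert_subset hwC hNC) hu).1 hC⟩
  · rintro ⟨hNC, hC⟩
    have hu : u ∉ C := fun huC => huS <| hC.mem_of_restrictG <|
      Finset.mem_sdiff.2 ⟨huC, fun h => G.loopless.irrefl u (hR u h)⟩
    exact (isMinVertexCover_iff_restrictG_sdiff hR hSR hcov
      (Finset.insert_subset hwC hNC) hu).2 hC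

end VertexCover

namespace StdCMVWC

open Sum

variable {ι : Type*} [LinearOrder ι] [Fintype ι] {G : SimpleGraph (ι ⊕ ι)}

theorem adj_inl_inr_self (hG : StdCMVWC G) (i : ι) : G.Adj (inl i) (inr i) :=
  hG.2.2.1 i

theorem le_of_adj_inl_inr (hG : StdCMVWC G) {i j : ι} (h : G.Adj (inl i) (inr j)) : i ≤ j :=
  hG.2.2.2.1 i j h

theorem not_adj_inl_inl_of_adj_inl_inr (hG : StdCMVWC G) {i j : ι}
    (h : G.Adj (inl i) (inr j)) : ¬ G.Adj (inl i) (inl j) :=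
  hG.2.2.2.2.1 i j h

theorem adj_inl_of_adj_inl_of_adj_inr (hG : StdCMVWC G) {i j k : ι} {z : ι ⊕ ι}
    (hz : z = inl i ∨ z = inr i) (hij : i ≠ j) (hjk : j ≠ k) (hik : i ≠ k)
    (hzj : G.Adj z (inl j)) (hyk : G.Adj (inr j) (inl k)) : G.Adj z (inl k) :=
  hG.2.2.2.2.2 i j k z hz hij hjk hik hzj hyk

theorem not_adj_inr_inr (hG : StdCMVWC G) (i j : ι) : ¬ G.Adj (inr i) (inr j) :=
  hG.2.1.1 (by simp) (by simp)

variable {m : ι}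

theorem eq_of_adj_inl_inr_of_isTop (hG : StdCMVWC G) (hm : IsTop m) {j : ι}
    (h : G.Adj (inl m) (inr j)) : j = m :=
  le_antisymm (hm j) (hG.le_of_adj_inl_inr h)

theorem adj_inl_of_adj_inr_of_isTop (hG : StdCMVWC G) (hm : IsTop m) {z : ι ⊕ ι}
    (hz : z = inl m ∨ z = inr m) {i j : ι} (hzi : G.Adj z (inl i)) (him : i ≠ m)
    (hji : G.Adj (inl j) (inr i)) : G.Adj z (inl j) := by
  by_cases hij : j = i
  · exact hij ▸ hzi
  have hjm : j ≠ m := fun hjm =>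
    him (le_antisymm (hm i) (hjm ▸ hG.le_of_adj_inl_inr hji))
  exact hG.adj_inl_of_adj_inl_of_adj_inr hz (Ne.symm him) (Ne.symm hij) (Ne.symm hjm) hzi
    hji.symm

theorem inl_mem_iff_inr_notMem_of_isTop (hG : StdCMVWC G) (hm : IsTop m)
    {C : Finset (ι ⊕ ι)} (hC : IsMinVertexCover G C) : inl m ∈ C ↔ inr m ∉ C := by
  refine ⟨fun hx hy => ?_, fun hy => (hC.1 (hG.adj_inl_inr_self m)).resolve_right hy⟩
  obtain ⟨w, hyw, hwC⟩ := hC.exists_adj_notMem hy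
  obtain ⟨w', hxw', hw'C⟩ := hC.exists_adj_notMem hx
  obtain ⟨j, rfl⟩ : ∃ j, w = inl j := by
    rcases w with j | j
    · exact ⟨j, rfl⟩
    · exact (hG.not_adj_inr_inr _ _ hyw).elim
  obtain ⟨k, rfl⟩ : ∃ k, w' = inl k := by
    rcases w' with k | k
    · exact ⟨k, rfl⟩
    · exact (hw'C (hG.eq_of_adj_inl_inr_of_isTop hm hxw' ▸ hy)).elim
  have hjm : j ≠ m := by rintro rfl; exact hwC hx
  have hkm : k ≠ m := by rintro rfl; exact G.loopless.irrefl _ hxw'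
  by_cases hkj : k = j
  · subst hkj
    exact hG.not_adj_inl_inl_of_adj_inl_inr hyw.symm hxw'.symm
  · have hkj' := hG.adj_inl_of_adj_inl_of_adj_inr (Or.inl rfl) hkm (Ne.symm hjm) hkj hxw'.symm
      hyw
    exact (hC.1 hkj').elim hw'C hwC

end StdCMVWC

section LastVertex

open Sum

variable {n : ℕ} {G : SimpleGraph (Fin (n + 1) ⊕ Fin (n + 1))} [DecidableRel G.Adj]

theorem mem_nbrX {i : Fin (n + 1)} : i ∈ nbrX n G ↔ G.Adj (inl i) (xnV n) := by
  simp [nbrX]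

theorem mem_nbrY {i : Fin (n + 1)} : i ∈ nbrY n G ↔ G.Adj (inl i) (ynV n) := by
  simp [nbrY]

theorem notMem_insert_image_inl_of_mem {A : Finset (Fin (n + 1))}
    {z v : Fin (n + 1) ⊕ Fin (n + 1)}
    (hz : Sum.elim id id z = Fin.last n)
    (hv : v ∈ {v | Sum.elim id id v ∉ A ∧ Sum.elim id id v ≠ Fin.last n}) :
    v ∉ insert z (A.image inl) := by
  intro hvR
  rcases Finset.mem_insert.1 hvR with rfl | hvA
  · exact hv.2 hz
  · obtain ⟨i, hi, rfl⟩ := Finset.mem_image.1 hvA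
    exact hv.1 hi

theorem StdCMVWC.mem_or_mem_of_adj_of_notMem_G₁ (hG : StdCMVWC G)
    {v w : Fin (n + 1) ⊕ Fin (n + 1)} (hvw : G.Adj v w)
    (hv : v ∉ {v | Sum.elim id id v ∉ nbrX n G ∧ Sum.elim id id v ≠ Fin.last n}) :
    v ∈ insert (ynV n) ((nbrX n G).image inl) ∨
      w ∈ insert (ynV n) ((nbrX n G).image inl) := by
  have hm : IsTop (Fin.last n) := Fin.le_last
  simp only [Set.mem_ofPred_eq, not_and_or, not_not] at hv
  rcases v with a | a
  · rcases hv with ha | rfl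
    · exact Or.inl (Finset.mem_insert_of_mem (Finset.mem_image_of_mem _ ha))
    · right
      rcases w with b | b
      · exact Finset.mem_insert_of_mem (Finset.mem_image_of_mem _ (mem_nbrX.2 hvw.symm))
      · rw [hG.eq_of_adj_inl_inr_of_isTop hm hvw]
        exact Finset.mem_insert_self _ _
  · rcases hv with ha | rfl
    · rcases w with b | b
      · have ham : a ≠ Fin.last n := fun h => G.loopless.irrefl _ (h ▸ mem_nbrX.1 ha)
        have hb := hG.adj_inl_of_adj_inr_of_isTop hm (Or.inl rfl) (mem_nbrX.1 ha).symm ham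
          hvw.symm
        exact Or.inr <| Finset.mem_insert_of_mem <| Finset.mem_image_of_mem _ (mem_nbrX.2 hb.symm)
      · exact (hG.not_adj_inr_inr _ _ hvw).elim
    · exact Or.inl (Finset.mem_insert_self _ _)

theorem StdCMVWC.mem_or_mem_of_adj_of_notMem_G₂ (hG : StdCMVWC G)
    {v w : Fin (n + 1) ⊕ Fin (n + 1)} (hvw : G.Adj v w)
    (hv : v ∉ {v | Sum.elim id id v ∉ nbrY n G ∧ Sum.elim id id v ≠ Fin.last n}) :
    v ∈ insert (xnV n) ((nbrY n G).image inl) ∨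
      w ∈ insert (xnV n) ((nbrY n G).image inl) := by
  have hm : IsTop (Fin.last n) := Fin.le_last
  simp only [Set.mem_ofPred_eq, not_and_or, not_not] at hv
  rcases v with a | a
  · rcases hv with ha | rfl
    · exact Or.inl (Finset.mem_insert_of_mem (Finset.mem_image_of_mem _ ha))
    · exact Or.inl (Finset.mem_insert_self _ _)
  · rcases w with b | b
    · refine Or.inr (Finset.mem_insert_of_mem (Finset.mem_image_of_mem _ (mem_nbrY.2 ?_)))
      rcases hv with ha | rfl
      · by_cases ham : a = Fin.last n
        · subst ham
          exact hvw.symm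
        · exact (hG.adj_inl_of_adj_inr_of_isTop hm (Or.inr rfl) (mem_nbrY.1 ha).symm ham
            hvw.symm).symm
      · exact hvw.symm
    · exact (hG.not_adj_inr_inr _ _ hvw).elim

end LastVertex

/-- Minimal vertex covers of `G` containing `y_n` (resp. `x_n`) correspond to minimal
vertex covers of `G_1` (resp. `G_2`): these two families partition the minimal vertex
covers of `G`. -/
theorem stmt4 (n : ℕ) (G : SimpleGraph (Fin (n + 1) ⊕ Fin (n + 1))) [DecidableRel G.Adj]
    (hG : StdCMVWC G) :
    (∀ C : Finset (Fin (n + 1) ⊕ Fin (n + 1)), ynV n ∈ C →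
      (IsMinVertexCover G C ↔
        (nbrX n G).image Sum.inl ⊆ C ∧
          IsMinVertexCover (G₁ n G) (C \ insert (ynV n) ((nbrX n G).image Sum.inl)))) ∧
    (∀ C : Finset (Fin (n + 1) ⊕ Fin (n + 1)), xnV n ∈ C →
      (IsMinVertexCover G C ↔
        (nbrY n G).image Sum.inl ⊆ C ∧
          IsMinVertexCover (G₂ n G) (C \ insert (xnV n) ((nbrY n G).image Sum.inl)))) ∧
    (∀ C : Finset (Fin (n + 1) ⊕ Fin (n + 1)), IsMinVertexCover G C →
      (xnV n ∈ C ↔ ynV n ∉ C)) := by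
  have hsplit := fun C (hC : IsMinVertexCover G C) =>
    hG.inl_mem_iff_inr_notMem_of_isTop Fin.le_last hC
  refine ⟨fun C hyC => ?_, fun C hxC => ?_, hsplit⟩
  · exact isMinVertexCover_iff_restrictG_of_adj (hG.adj_inl_inr_self _)
      (Finset.forall_mem_image.2 fun i hi => (mem_nbrX.1 hi).symm) (fun h => h.2 rfl)
      (fun _ => notMem_insert_image_inl_of_mem rfl) (fun _ _ => hG.mem_or_mem_of_adj_of_notMem_G₁)
      (fun hC hx => (hsplit C hC).1 hx hyC) hyC
  · exact isMinVertexCover_iff_restrictG_of_adj (hG.adj_inl_inr_self _).symm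
      (Finset.forall_mem_image.2 fun i hi => (mem_nbrY.1 hi).symm) (fun h => h.2 rfl)
      (fun _ => notMem_insert_image_inl_of_mem rfl) (fun _ _ => hG.mem_or_mem_of_adj_of_notMem_G₂)
      (fun hC => (hsplit C hC).1 hxC) hxC
end

section
/- Let G be any finite simple graph with vertex set {x_1,…,x_n}. Then the cover ideal I(G*)^∨ of the whisker graph G*, regarded in the polynomial ring S = K[x_1,…,x_n,y_1,…,y_n] over a field K, has linear quotients with respect to the decreasing lexicographic order on its minimal monomial generators induced by x_n > y_n > x_{n−1} > y_{n−1} > ⋯ > x_1 > y_1. (This is the case k = 0 of the paper's Corollary 4.3.) -/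
/-- The whisker graph `G*` of a graph `G` on `{x_1,…,x_n}`: add a new vertex `y_i` and
the whisker edge `x_i y_i` for each `i`. -/
def whisker {n : ℕ} (G : SimpleGraph (Fin n)) : SimpleGraph (Fin n ⊕ Fin n) where
  Adj v w :=
    (∃ i j, G.Adj i j ∧ v = Sum.inl i ∧ w = Sum.inl j) ∨
    (∃ i, v = Sum.inl i ∧ w = Sum.inr i) ∨
    (∃ i, v = Sum.inr i ∧ w = Sum.inl i)
  symm := ⟨by
    rintro v w (⟨i, j, h, rfl, rfl⟩ | ⟨i, rfl, rfl⟩ | ⟨i, rfl, rfl⟩)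
    · exact Or.inl ⟨j, i, h.symm, rfl, rfl⟩
    · exact Or.inr (Or.inr ⟨i, rfl, rfl⟩)
    · exact Or.inr (Or.inl ⟨i, rfl, rfl⟩)⟩
  loopless := ⟨by
    rintro v (⟨i, j, h, rfl, hw⟩ | ⟨i, rfl, hw⟩ | ⟨i, rfl, hw⟩)
    · obtain rfl : i = j := Sum.inl_injective hw
      exact G.loopless.irrefl i h
    · exact Sum.inl_ne_inr hw
    · exact Sum.inr_ne_inl hw⟩

open MvPolynomial

/-- The variable order `x_n > y_n > x_{n-1} > y_{n-1} > ⋯ > x_1 > y_1`: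
`v < w` iff the index of `v` is smaller than that of `w`, or `v = y_i` and `w = x_i`. -/
def varLt {m : ℕ} (v w : Fin m ⊕ Fin m) : Prop :=
  Sum.elim id id v < Sum.elim id id w ∨ ∃ i, v = Sum.inr i ∧ w = Sum.inl i

/-- `C >_lex D` for the squarefree monomials `∏_{v∈C} v` and `∏_{v∈D} v`, in the
lexicographic order induced by `x_n > y_n > ⋯ > x_1 > y_1`. -/
def CoverLexGT {m : ℕ} (C D : Finset (Fin m ⊕ Fin m)) : Prop :=
  ∃ v, v ∈ C ∧ v ∉ D ∧ ∀ w, varLt v w → (w ∈ C ↔ w ∈ D)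

/-! A minimal vertex cover of `G*` contains exactly one of `x_i`, `y_i` for each `i`. If
`D >lex C` are minimal covers, the first variable where they differ is some `x_i ∉ C`: were it
`y_i`, then `x_i ∈ C` would lie in `D` as well. Conversely, for `x_i ∉ C` exchanging `y_i` for
`x_i` gives a minimal cover `D >lex C` with `x_i u_C = y_i u_D`. For squarefree monomials these
two facts say that the colon ideal is generated by the `x_i ∉ C`. -/

namespace IsVertexCover

variable {V : Type*} [DecidableEq V] {G : SimpleGraph V} {C D : Finset V} {v : V}

theorem of_erase_subset (hC : IsVertexCover G C) (hsub : C.erase v ⊆ D)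
    (hnbr : ∀ w, G.Adj v w → w ∈ D) : IsVertexCover G D := by
  intro a b hab
  rcases hC hab with ha | hb
  · by_cases hav : a = v
    · subst hav; exact Or.inr (hnbr b hab)
    · exact Or.inl (hsub (Finset.mem_erase.mpr ⟨hav, ha⟩))
  · by_cases hbv : b = v
    · subst hbv; exact Or.inl (hnbr a hab.symm)
    · exact Or.inr (hsub (Finset.mem_erase.mpr ⟨hbv, hb⟩))

end IsVertexCover

theorem isMinVertexCover_iff {V : Type*} {G : SimpleGraph V} {C : Finset V} :
    IsMinVertexCover G C ↔ IsVertexCover G C ∧ ∀ v ∈ C, ∃ w, G.Adj v w ∧ w ∉ C := by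
  classical
  refine ⟨fun hC => ⟨hC.1, fun v hv => ?_⟩, fun ⟨hC, hpriv⟩ => ⟨hC, fun D hDC hD => ?_⟩⟩
  · by_contra! hnbr
    have hcov : IsVertexCover G (C.erase v) :=
      hC.1.of_erase_subset subset_rfl fun w hw =>
        Finset.mem_erase.mpr ⟨(G.ne_of_adj hw).symm, hnbr w hw⟩
    exact Finset.erase_eq_self.mp (hC.2 _ (Finset.erase_subset v C) hcov) hv
  · refine hDC.antisymm fun v hv => ?_
    obtain ⟨w, hvw, hw⟩ := hpriv v hv
    exact (hD hvw).resolve_right fun hwD => hw (hDC hwD)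

section Whisker

variable {n : ℕ} {G : SimpleGraph (Fin n)}

theorem whisker_adj_inl_inr (i : Fin n) : (whisker G).Adj (Sum.inl i) (Sum.inr i) :=
  Or.inr (Or.inl ⟨i, rfl, rfl⟩)

theorem whisker_adj_inr_iff {i : Fin n} {w : Fin n ⊕ Fin n} :
    (whisker G).Adj (Sum.inr i) w ↔ w = Sum.inl i := by
  refine ⟨?_, fun h => h ▸ (whisker_adj_inl_inr i).symm⟩
  rintro (⟨a, b, -, h, -⟩ | ⟨a, h, -⟩ | ⟨a, h, rfl⟩)
  · exact absurd h Sum.inr_ne_inl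
  · exact absurd h Sum.inr_ne_inl
  · rw [Sum.inr_injective h]

theorem isMinVertexCover_whisker_iff {C : Finset (Fin n ⊕ Fin n)} :
    IsMinVertexCover (whisker G) C ↔
      IsVertexCover (whisker G) C ∧ ∀ i, Sum.inr i ∈ C ↔ Sum.inl i ∉ C := by
  rw [isMinVertexCover_iff]
  refine ⟨fun ⟨hC, hpriv⟩ => ⟨hC, fun i => ⟨fun hr => ?_, fun hl => ?_⟩⟩,
    fun ⟨hC, hpair⟩ => ⟨hC, ?_⟩⟩
  · obtain ⟨w, hw, hwC⟩ := hpriv _ hr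
    exact whisker_adj_inr_iff.mp hw ▸ hwC
  · exact (hC (whisker_adj_inl_inr i)).resolve_left hl
  · rintro (i | i) hv
    · exact ⟨_, whisker_adj_inl_inr i, fun hr => (hpair i).mp hr hv⟩
    · exact ⟨_, (whisker_adj_inl_inr i).symm, (hpair i).mp hv⟩

theorem IsMinVertexCover.whisker_insert_erase {C : Finset (Fin n ⊕ Fin n)}
    (hC : IsMinVertexCover (whisker G) C) (i : Fin n) :
    IsMinVertexCover (whisker G) (insert (Sum.inl i) (C.erase (Sum.inr i))) := by
  rw [isMinVertexCover_whisker_iff] at hC ⊢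
  refine ⟨hC.1.of_erase_subset (Finset.subset_insert _ _) fun w hw => ?_, fun j => ?_⟩
  · simp [whisker_adj_inr_iff.mp hw]
  · by_cases hji : j = i
    · simp [hji]
    · simpa [hji] using hC.2 j

theorem coverLexGT_insert_erase {C : Finset (Fin n ⊕ Fin n)} {i : Fin n}
    (hi : Sum.inl i ∉ C) : CoverLexGT (insert (Sum.inl i) (C.erase (Sum.inr i))) C := by
  refine ⟨Sum.inl i, Finset.mem_insert_self _ _, hi, ?_⟩
  rintro w (hlt | ⟨_, h, -⟩)
  · have hwl : w ≠ Sum.inl i := by rintro rfl; exact lt_irrefl _ hlt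
    have hwr : w ≠ Sum.inr i := by rintro rfl; exact lt_irrefl _ hlt
    simp [hwl, hwr]
  · exact absurd h Sum.inl_ne_inr

theorem CoverLexGT.exists_inl_mem_not_mem {C D : Finset (Fin n ⊕ Fin n)}
    (hC : IsMinVertexCover (whisker G) C) (hD : IsMinVertexCover (whisker G) D)
    (hDC : CoverLexGT D C) : ∃ i, Sum.inl i ∈ D ∧ Sum.inl i ∉ C := by
  obtain ⟨v, hvD, hvC, hagree⟩ := hDC
  rcases v with i | i
  · exact ⟨i, hvD, hvC⟩
  · have hpairC := (isMinVertexCover_whisker_iff.mp hC).2 i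
    have hpairD := (isMinVertexCover_whisker_iff.mp hD).2 i
    have hlC : Sum.inl i ∈ C := not_not.mp (mt hpairC.mpr hvC)
    exact absurd ((hagree _ (Or.inr ⟨i, rfl, rfl⟩)).mpr hlC) (hpairD.mp hvD)

end Whisker

namespace MvPolynomial

variable {σ R : Type*} [CommSemiring R]

theorem prod_X_eq_monomial_indicator (s : Finset σ) :
    ∏ v ∈ s, (X v : MvPolynomial σ R) = monomial (Finsupp.indicator s fun _ _ => 1) 1 := by
  simpa using prod_X_pow (R := R) 1 s

theorem colon_span_prod_X_eq_span_X [DecidableEq σ] (𝒟 : Set (Finset σ)) (C : Finset σ) (T : Set σ)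
    (hmeet : ∀ D ∈ 𝒟, ∃ v ∈ T, v ∈ D ∧ v ∉ C)
    (hdvd : ∀ v ∈ T, ∃ D ∈ 𝒟, D ⊆ insert v C) :
    (Ideal.span ((fun D => ∏ v ∈ D, (X v : MvPolynomial σ R)) '' 𝒟)).colon
        ((Ideal.span {∏ v ∈ C, X v} : Ideal (MvPolynomial σ R)) : Set (MvPolynomial σ R)) =
      Ideal.span (X '' T) := by
  refine le_antisymm (fun f hf => ?_) (Ideal.span_le.mpr ?_)
  · rw [Ideal.mem_colon_span_singleton] at hf
    simp_rw [prod_X_eq_monomial_indicator, ← Set.image_image (fun s => monomial s (1 : R))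
      (fun D : Finset σ => Finsupp.indicator D fun _ _ => 1), mem_ideal_span_monomial_image,
      Set.mem_image] at hf
    refine mem_ideal_span_X_image.mpr fun μ hμ => ?_
    have hsupp : μ + Finsupp.indicator C (fun _ _ => 1) ∈
        (f * monomial (Finsupp.indicator C fun _ _ => 1) 1).support := by
      rwa [mem_support_iff, coeff_mul_monomial, mul_one, ← mem_support_iff]
    obtain ⟨-, ⟨D, hD, rfl⟩, hle⟩ := hf _ hsupp
    obtain ⟨v, hvT, hvD, hvC⟩ := hmeet D hD
    refine ⟨v, hvT, fun hμv => ?_⟩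
    simpa [Finsupp.indicator_apply, hvD, hvC, hμv] using hle v
  · rintro _ ⟨v, hv, rfl⟩
    obtain ⟨D, hD, hDsub⟩ := hdvd v hv
    rw [SetLike.mem_coe, Ideal.mem_colon_span_singleton]
    refine Ideal.mem_of_dvd _ ?_ (Ideal.subset_span ⟨D, hD, rfl⟩)
    calc ∏ w ∈ D, (X w : MvPolynomial σ R)
        ∣ ∏ w ∈ insert v C, X w := Finset.prod_dvd_prod_of_subset _ _ _ hDsub
      _ ∣ X v * ∏ w ∈ C, X w := by
        by_cases hvC : v ∈ C
        · rw [Finset.insert_eq_of_mem hvC]; exact dvd_mul_left _ _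
        · rw [Finset.prod_insert hvC]

end MvPolynomial

/-- The cover ideal of the whisker graph `G*` of any finite simple graph `G` has linear
quotients with respect to the decreasing lexicographic order on its minimal monomial
generators induced by `x_n > y_n > x_{n-1} > y_{n-1} > ⋯ > x_1 > y_1`. -/
theorem stmt11 (n : ℕ) (K : Type*) [Field K] (G : SimpleGraph (Fin n)) :
    ∀ C : Finset (Fin n ⊕ Fin n), IsMinVertexCover (whisker G) C →
      ∃ T : Set (Fin n ⊕ Fin n),
        Submodule.colon
          (Ideal.span {p : MvPolynomial (Fin n ⊕ Fin n) K |
            ∃ D, IsMinVertexCover (whisker G) D ∧ CoverLexGT D C ∧ p = ∏ v ∈ D, X v})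
          ((Ideal.span {∏ v ∈ C, X v} : Ideal (MvPolynomial (Fin n ⊕ Fin n) K)) : Set (MvPolynomial (Fin n ⊕ Fin n) K))
        = Ideal.span ((fun v => (X v : MvPolynomial (Fin n ⊕ Fin n) K)) '' T) := by
  intro C hC
  have hgens : {p : MvPolynomial (Fin n ⊕ Fin n) K |
      ∃ D, IsMinVertexCover (whisker G) D ∧ CoverLexGT D C ∧ p = ∏ v ∈ D, X v} =
      (fun D => ∏ v ∈ D, X v) '' {D | IsMinVertexCover (whisker G) D ∧ CoverLexGT D C} := by
    ext p
    simp only [Set.mem_ofPred_eq, Set.mem_image, and_assoc, eq_comm]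
  refine ⟨Sum.inl '' {i | Sum.inl i ∉ C}, hgens ▸ MvPolynomial.colon_span_prod_X_eq_span_X _ _ _ ?_ ?_⟩
  · rintro D ⟨hD, hDC⟩
    obtain ⟨i, hiD, hiC⟩ := hDC.exists_inl_mem_not_mem hC hD
    exact ⟨_, ⟨i, hiC, rfl⟩, hiD, hiC⟩
  · rintro _ ⟨i, hiC, rfl⟩
    exact ⟨_, ⟨hC.whisker_insert_erase i, coverLexGT_insert_erase hiC⟩,
      Finset.insert_subset_insert _ (Finset.erase_subset _ _)⟩
end

section
/- Let (P,⪰) be a finite poset on {p_1,…,p_n}, K a field, and ℓ ≥ 1. In R = K[x_{i,j}, y_{i,j} : i ∈ [n], j ∈ [ℓ]], the ideal generated by the modified polarizations of the products u_{𝓘_1}u_{𝓘_2}⋯u_{𝓘_ℓ}, taken over all chains 𝓘_1 ⊆ 𝓘_2 ⊆ ⋯ ⊆ 𝓘_ℓ of poset ideals of P, equals the Hibi ideal H_{P(ℓ)} of the poset P(ℓ) (formed in R via the identifications x_{(p_i,j)} = x_{i,j} and y_{(p_i,j)} = y_{i,j}). Equivalently, (H_P^ℓ)^℘ = H_{P(ℓ)},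 where ℘ denotes the modified polarization. -/
open Finset MvPolynomial


/-- The Hibi generator `u_𝓙 = (∏_{q∈𝓙} x_q)(∏_{q∉𝓙} y_q)` attached to a subset `𝓙` of a
finite set `Q`, in the polynomial ring on the variables `x_q = Sum.inl q`,
`y_q = Sum.inr q`. -/
noncomputable def hibiGen (K : Type*) [Field K] (Q : Type*) [Fintype Q] [DecidableEq Q]
    (J : Finset Q) : MvPolynomial (Q ⊕ Q) K :=
  (∏ q ∈ J, X (Sum.inl q)) * ∏ q ∈ Jᶜ, X (Sum.inr q)

/-- The modified polarization of the product `u_{𝓘_1}u_{𝓘_2}⋯u_{𝓘_ℓ}` attached to a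
chain `I : Fin ℓ → Finset P` of subsets of `P`: the product is
`∏_i x_i^{a_i} y_i^{b_i}` with `a_i = #{k : i ∈ I k}` and `b_i = #{k : i ∉ I k}`, and its
modified polarization is `∏_i (x_{i,1}⋯x_{i,a_i})·(y_{i,ℓ−b_i+1}⋯y_{i,ℓ})` (written with
`Fin ℓ` indices `j`, so `j < a_i` resp. `ℓ − b_i ≤ j`). -/
noncomputable def chainPol (K : Type*) [Field K] (P : Type*) [Fintype P] [DecidableEq P]
    (ℓ : ℕ) (I : Fin ℓ → Finset P) : MvPolynomial ((P × Fin ℓ) ⊕ (P × Fin ℓ)) K :=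
  ∏ i : P,
    ((∏ j ∈ univ.filter fun j : Fin ℓ =>
        (j : ℕ) < (univ.filter fun k => i ∈ I k).card, X (Sum.inl (i, j))) *
     (∏ j ∈ univ.filter fun j : Fin ℓ =>
        ℓ - (univ.filter fun k => i ∉ I k).card ≤ (j : ℕ), X (Sum.inr (i, j))))

-- Lemma B: a lower subset of Fin ℓ is an initial segment
lemma lowerFin {ℓ : ℕ} (S : Finset (Fin ℓ))
    (h : ∀ j j' : Fin ℓ, j ≤ j' → j' ∈ S → j ∈ S) (j : Fin ℓ) :
    j ∈ S ↔ (j : ℕ) < S.card := by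
  constructor
  · intro hj
    have hsub : Finset.Iic j ⊆ S := fun t ht => h t j (Finset.mem_Iic.mp ht) hj
    have := Finset.card_le_card hsub
    rw [Fin.card_Iic] at this
    omega
  · intro hj
    by_contra hjS
    have hsub : S ⊆ Finset.Iio j := by
      intro t ht
      rw [Finset.mem_Iio]
      by_contra htj
      exact hjS (h j t (le_of_not_gt htj) ht)
    have := Finset.card_le_card hsub
    rw [Fin.card_Iio] at this
    omega

-- Lemma C: chainPol equals hibiGen of the associated staircase set
lemma chainPol_eq_hibiGen (K : Type*) [Field K] (P : Type*) [Fintype P] [DecidableEq P]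
    (ℓ : ℕ) (I : Fin ℓ → Finset P) :
    chainPol K P ℓ I = hibiGen K (P × Fin ℓ)
      (univ.filter fun p : P × Fin ℓ =>
        (p.2 : ℕ) < (univ.filter fun k => p.1 ∈ I k).card) := by
  have hab : ∀ i : P, (univ.filter fun k => i ∈ I k).card
      + (univ.filter fun k => i ∉ I k).card = ℓ := by
    intro i
    rw [Finset.card_filter_add_card_filter_not]
    simp
  unfold chainPol hibiGen
  rw [Finset.compl_filter]
  rw [Finset.prod_filter, Finset.prod_filter, Fintype.prod_prod_type, Fintype.prod_prod_type,
    ← Finset.prod_mul_distrib]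
  refine Finset.prod_congr rfl fun i _ => ?_
  rw [Finset.prod_filter, Finset.prod_filter]
  congr 1
  refine Finset.prod_congr rfl fun j _ => ?_
  have h := hab i
  have : (ℓ - (univ.filter fun k => i ∉ I k).card ≤ (j : ℕ)) ↔
      ¬ ((j : ℕ) < (univ.filter fun k => i ∈ I k).card) := by omega
  simp only [this]

/-- `(H_P^ℓ)^℘ = H_{P(ℓ)}`: the ideal generated by the modified polarizations of the
products `u_{𝓘_1}⋯u_{𝓘_ℓ}`, over all chains `𝓘_1 ⊆ ⋯ ⊆ 𝓘_ℓ` of poset ideals of `P`,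
equals the Hibi ideal of the poset `P(ℓ) = P × [ℓ]` (with componentwise order), formed in
`R = K[x_{i,j}, y_{i,j}]`. -/
theorem stmt13 (K : Type*) [Field K] (P : Type*) [PartialOrder P] [Fintype P]
    [DecidableEq P] (ℓ : ℕ) (hℓ : 1 ≤ ℓ) :
    Ideal.span {m : MvPolynomial ((P × Fin ℓ) ⊕ (P × Fin ℓ)) K |
        ∃ I : Fin ℓ → Finset P, Monotone I ∧ (∀ k, IsLowerSet (↑(I k) : Set P)) ∧
          m = chainPol K P ℓ I} =
    Ideal.span {m : MvPolynomial ((P × Fin ℓ) ⊕ (P × Fin ℓ)) K |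
        ∃ J : Finset (P × Fin ℓ), IsLowerSet (↑J : Set (P × Fin ℓ)) ∧
          m = hibiGen K (P × Fin ℓ) J} := by
  congr 1
  ext m
  simp only [Set.mem_setOf_eq]
  constructor
  · rintro ⟨I, hmono, hlow, rfl⟩
    refine ⟨univ.filter fun p : P × Fin ℓ =>
        (p.2 : ℕ) < (univ.filter fun k => p.1 ∈ I k).card, ?_, ?_⟩
    · intro p q hqp hp
      simp only [Finset.coe_filter, Set.mem_setOf_eq, Finset.mem_univ, true_and] at hp ⊢
      have hsub : (univ.filter fun k => p.1 ∈ I k) ⊆ (univ.filter fun k => q.1 ∈ I k) := by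
        intro k hk
        simp only [Finset.mem_filter, Finset.mem_univ, true_and] at hk ⊢
        exact hlow k hqp.1 hk
      have hcard := Finset.card_le_card hsub
      have hj : (q.2 : ℕ) ≤ (p.2 : ℕ) := hqp.2
      omega
    · exact chainPol_eq_hibiGen K P ℓ I
  · rintro ⟨J, hJ, rfl⟩
    refine ⟨fun k => univ.filter fun i => (i, k.rev) ∈ J, ?_, ?_, ?_⟩
    · intro k k' hkk' i hi
      simp only [Finset.mem_filter, Finset.mem_univ, true_and] at hi ⊢
      exact hJ ⟨le_refl i, Fin.rev_le_rev.mpr hkk'⟩ hi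
    · intro k a b hba ha
      simp only [Finset.mem_coe, Finset.mem_filter, Finset.mem_univ, true_and] at ha ⊢
      exact hJ (Prod.mk_le_mk.mpr ⟨hba, le_refl _⟩) ha
    · rw [chainPol_eq_hibiGen]
      congr 1
      ext ⟨i, j⟩
      simp only [Finset.mem_filter, Finset.mem_univ, true_and]
      -- a_i = #{k : (i, k.rev) ∈ J} = #{j : (i,j) ∈ J}
      have hcard : (univ.filter fun k : Fin ℓ => (i, k.rev) ∈ J).card
          = (univ.filter fun j : Fin ℓ => (i, j) ∈ J).card := by
        refine Finset.card_bij' (fun k _ => k.rev) (fun k _ => k.rev) ?_ ?_ ?_ ?_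
        · intro k hk
          simp only [Finset.mem_filter, Finset.mem_univ, true_and] at hk ⊢
          exact hk
        · intro k hk
          simp only [Finset.mem_filter, Finset.mem_univ, true_and, Fin.rev_rev] at hk ⊢
          exact hk
        · intro k _; exact Fin.rev_rev k
        · intro k _; exact Fin.rev_rev k
      rw [hcard]
      have := lowerFin (univ.filter fun j : Fin ℓ => (i, j) ∈ J) ?_ j
      · simp only [Finset.mem_filter, Finset.mem_univ, true_and] at this
        exact this
      · intro j j' hjj' hj'
        simp only [Finset.mem_filter, Finset.mem_univ, true_and] at hj' ⊢
        exact hJ ⟨le_refl i, hjj'⟩ hj'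
end

section
/- Let (P,⪰) be a finite poset on {p_1,…,p_n} and K a field. Then the Hibi ideal H_P ⊂ S = K[x_1,…,x_n,y_1,…,y_n] has linear quotients. (This is the case k = 0 of the paper's Corollary 4.5.) -/
/-!
List the poset ideals by nondecreasing cardinality. If `𝓙'` comes before `𝓙`, then `𝓙 ⊄ 𝓙'`,
so some maximal element `q` of `𝓙` lies outside `𝓙'`, and `y_q` divides `u_𝓙' / gcd(u_𝓙', u_𝓙)`.
Conversely, for `q` maximal in `𝓙` the set `𝓙 ∖ {q}` is a smaller poset ideal and
`y_q u_𝓙 = x_q u_{𝓙 ∖ {q}}`. Hence the colon ideal at `𝓙` is generated by the `y_q`, `q`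
maximal in `𝓙`.
-/

open Finset MvPolynomial

/-- The Hibi ideal `H_P` of a finite poset `P`, generated by the monomials `u_𝓘` for
`𝓘` a poset ideal (lower set) of `P`. -/
noncomputable def hibiIdeal (K : Type*) [Field K] (P : Type*) [PartialOrder P] [Fintype P]
    [DecidableEq P] : Ideal (MvPolynomial (P ⊕ P) K) :=
  Ideal.span {m | ∃ J : Finset P, IsLowerSet (↑J : Set P) ∧ m = hibiGen K P J}

/-- `x^e` is a minimal monomial generator of the monomial ideal `I`, i.e. a monomial of
`I` minimal with respect to divisibility among the monomials of `I`. -/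
def IsMinGen {σ K : Type*} [Field K] (I : Ideal (MvPolynomial σ K)) (e : σ →₀ ℕ) : Prop :=
  (monomial e (1 : K) ∈ I) ∧
    ∀ e' : σ →₀ ℕ, monomial e' (1 : K) ∈ I → e' ≤ e → e' = e

/-- A monomial ideal `I` has linear quotients: its minimal monomial generating set can be
listed as `u_1, …, u_m` so that each colon ideal `(u_1,…,u_{ℓ−1}) : u_ℓ` is generated by
a subset of the variables. -/
def HasLinearQuotients {σ K : Type*} [Field K] (I : Ideal (MvPolynomial σ K)) : Prop :=
  ∃ (m : ℕ) (u : Fin m → (σ →₀ ℕ)),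
    (∀ k, IsMinGen I (u k)) ∧
    (∀ e, IsMinGen I e → ∃! k, u k = e) ∧
    ∀ ℓ : Fin m, ∃ T : Set σ,
      Submodule.colon
          (Ideal.span {p | ∃ k, k < ℓ ∧ p = monomial (u k) (1 : K)})
          (Ideal.span {monomial (u ℓ) (1 : K)})
        = Ideal.span ((fun v => (X v : MvPolynomial σ K)) '' T)

namespace MvPolynomial

variable {σ R : Type*} [CommSemiring R]

theorem colon_span_monomial_eq_span_X (S : Set (σ →₀ ℕ)) (e : σ →₀ ℕ) (T : Set σ)
    (hT : ∀ v ∈ T, ∃ s ∈ S, s ≤ Finsupp.single v 1 + e)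
    (hS : ∀ s ∈ S, ∀ d, s ≤ d + e → ∃ v ∈ T, Finsupp.single v 1 ≤ d) :
    (Ideal.span ((fun s => monomial s (1 : R)) '' S)).colon
        (Ideal.span {monomial e (1 : R)} : Set (MvPolynomial σ R))
      = Ideal.span (X '' T) := by
  have hX : (X '' T : Set (MvPolynomial σ R))
      = (fun s => monomial s (1 : R)) '' ((fun v => Finsupp.single v 1) '' T) := by
    rw [Set.image_image]; rfl
  apply le_antisymm
  · intro f hf
    rw [Ideal.mem_colon_span_singleton, mem_ideal_span_monomial_image] at hf
    rw [hX, mem_ideal_span_monomial_image]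
    intro d hd
    have hde : d + e ∈ (f * monomial e (1 : R)).support := by
      rwa [mem_support_iff, coeff_mul_monomial, mul_one, ← mem_support_iff]
    obtain ⟨s, hs, hsle⟩ := hf _ hde
    obtain ⟨v, hv, hvd⟩ := hS s hs d hsle
    exact ⟨_, Set.mem_image_of_mem _ hv, hvd⟩
  · rw [Ideal.span_le]
    rintro _ ⟨v, hv, rfl⟩
    obtain ⟨s, hs, hsle⟩ := hT v hv
    rw [SetLike.mem_coe, Ideal.mem_colon_span_singleton, X, monomial_mul, one_mul,
      mem_ideal_span_monomial_image]
    intro d hd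
    rw [Finset.eq_of_mem_singleton (support_monomial_subset hd)]
    exact ⟨s, hs, hsle⟩

end MvPolynomial

theorem hasLinearQuotients_of_injective {σ K : Type*} [Field K] {I : Ideal (MvPolynomial σ K)}
    {m : ℕ} (u : Fin m → σ →₀ ℕ) (hu : Function.Injective u)
    (hrange : ∀ e, IsMinGen I e ↔ e ∈ Set.range u)
    (hcolon : ∀ ℓ, ∃ T : Set σ,
      (Ideal.span ((fun s => monomial s (1 : K)) '' (u '' Set.Iio ℓ))).colon
          (Ideal.span {monomial (u ℓ) (1 : K)} : Set (MvPolynomial σ K)) = Ideal.span (X '' T)) :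
    HasLinearQuotients I := by
  refine ⟨m, u, fun k => (hrange _).2 ⟨k, rfl⟩, fun e he => ?_, fun ℓ => ?_⟩
  · obtain ⟨k, rfl⟩ := (hrange e).1 he
    exact ⟨k, rfl, fun j hj => hu hj⟩
  · obtain ⟨T, hT⟩ := hcolon ℓ
    refine ⟨T, Eq.trans ?_ hT⟩
    congr 3
    ext p
    simp [eq_comm]

theorem Finset.exists_list_nodup_pairwise_le {α : Type*} (s : Finset α) (f : α → ℕ) :
    ∃ l : List α, l.Nodup ∧ (∀ a, a ∈ l ↔ a ∈ s) ∧ l.Pairwise (fun a b => f a ≤ f b) := by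
  refine ⟨s.toList.mergeSort (fun a b => decide (f a ≤ f b)),
    (List.mergeSort_perm _ _).nodup_iff.2 s.nodup_toList, by simp [List.mem_mergeSort], ?_⟩
  simpa using List.pairwise_mergeSort (le := fun a b => decide (f a ≤ f b))
    (fun a b c hab hbc => by simp at *; omega) (fun a b => by simpa using Nat.le_total _ _) _

theorem IsLowerSet.exists_maximal_notMem {α : Type*} [Preorder α] {J J' : Finset α}
    (hJ' : IsLowerSet (J' : Set α)) (h : ¬ J ⊆ J') :
    ∃ q, Maximal (· ∈ J) q ∧ q ∉ J' := by
  obtain ⟨s, hsJ, hsJ'⟩ := Finset.not_subset.1 h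
  obtain ⟨q, hsq, hq⟩ := J.exists_le_maximal hsJ
  exact ⟨q, hq, fun hqJ' => hsJ' (hJ' hsq hqJ')⟩

theorem IsLowerSet.erase_of_maximal {α : Type*} [PartialOrder α] [DecidableEq α]
    {J : Finset α} (hJ : IsLowerSet (J : Set α)) {q : α} (hq : Maximal (· ∈ J) q) :
    IsLowerSet (J.erase q : Set α) := by
  intro a b hba ha
  obtain ⟨haq, haJ⟩ := Finset.mem_erase.1 ha
  refine Finset.mem_erase.2 ⟨?_, hJ hba haJ⟩
  rintro rfl
  exact haq (hq.eq_of_ge haJ hba)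

section Hibi

variable {P : Type*} [Fintype P] [DecidableEq P]

noncomputable def hibiExp (J : Finset P) : P ⊕ P →₀ ℕ :=
  (∑ q ∈ J, Finsupp.single (Sum.inl q) 1) + ∑ q ∈ Jᶜ, Finsupp.single (Sum.inr q) 1

@[simp]
theorem hibiExp_inl (J : Finset P) (r : P) : hibiExp J (Sum.inl r) = if r ∈ J then 1 else 0 := by
  simp [hibiExp, Finsupp.single_apply]

@[simp]
theorem hibiExp_inr (J : Finset P) (r : P) : hibiExp J (Sum.inr r) = if r ∈ J then 0 else 1 := by
  simp [hibiExp, Finsupp.single_apply]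

theorem hibiGen_eq_monomial (K : Type*) [Field K] (J : Finset P) :
    hibiGen K P J = monomial (hibiExp J) (1 : K) := by
  rw [hibiGen, hibiExp, ← one_mul (1 : K), ← monomial_mul, monomial_sum_one, monomial_sum_one]
  rfl

theorem eq_of_hibiExp_le {J J' : Finset P} (h : hibiExp J ≤ hibiExp J') : J = J' := by
  ext r
  have hl := h (Sum.inl r)
  have hr := h (Sum.inr r)
  simp only [hibiExp_inl, hibiExp_inr] at hl hr
  split_ifs at hl hr <;> simp_all

theorem hibiExp_injective : Function.Injective (hibiExp (P := P)) :=
  fun _ _ h => eq_of_hibiExp_le h.le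

theorem hibiExp_erase_le (J : Finset P) (q : P) :
    hibiExp (J.erase q) ≤ Finsupp.single (Sum.inr q) 1 + hibiExp J := by
  rintro (r | r) <;> by_cases hrq : r = q <;> by_cases hr : r ∈ J <;>
    simp [hrq, hr]

theorem single_inr_le_of_hibiExp_le {J J' : Finset P} {d : P ⊕ P →₀ ℕ}
    (h : hibiExp J' ≤ d + hibiExp J) {q : P} (hqJ : q ∈ J) (hqJ' : q ∉ J') :
    Finsupp.single (Sum.inr q) 1 ≤ d := by
  have := h (Sum.inr q)
  simp only [hibiExp_inr, Finsupp.add_apply, hqJ, hqJ', if_true, if_false] at this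
  simpa [Finsupp.single_le_iff, Nat.one_le_iff_ne_zero] using this

variable [PartialOrder P]

theorem hibiIdeal_eq_span_monomial (K : Type*) [Field K] :
    hibiIdeal K P = Ideal.span ((fun s => monomial s (1 : K)) ''
      (hibiExp '' {J : Finset P | IsLowerSet (J : Set P)})) := by
  rw [hibiIdeal, Set.image_image]
  congr 1
  ext p
  simp [hibiGen_eq_monomial, eq_comm]

theorem isMinGen_hibiIdeal_iff (K : Type*) [Field K] (e : P ⊕ P →₀ ℕ) :
    IsMinGen (hibiIdeal K P) e ↔ ∃ J : Finset P, IsLowerSet (J : Set P) ∧ hibiExp J = e := by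
  have hmem : ∀ e', monomial e' (1 : K) ∈ hibiIdeal K P ↔
      ∃ J : Finset P, IsLowerSet (J : Set P) ∧ hibiExp J ≤ e' := by
    intro e'
    classical
    simp [hibiIdeal_eq_span_monomial, mem_ideal_span_monomial_image, support_monomial]
  constructor
  · rintro ⟨he, hmin⟩
    obtain ⟨J, hJ, hle⟩ := (hmem e).1 he
    exact ⟨J, hJ, hmin _ ((hmem _).2 ⟨J, hJ, le_rfl⟩) hle⟩
  · rintro ⟨J, hJ, rfl⟩
    refine ⟨(hmem _).2 ⟨J, hJ, le_rfl⟩, fun e' he' hle => le_antisymm hle ?_⟩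
    obtain ⟨J', -, hle'⟩ := (hmem e').1 he'
    rwa [← eq_of_hibiExp_le (hle'.trans hle)]

theorem colon_span_hibiExp_eq_span_X (K : Type*) [Field K] {A : Set (Finset P)} {J : Finset P}
    (hJ : IsLowerSet (J : Set P))
    (hA : ∀ J' ∈ A, IsLowerSet (J' : Set P) ∧ J' ≠ J ∧ #J' ≤ #J)
    (hA' : ∀ J' : Finset P, IsLowerSet (J' : Set P) → #J' < #J → J' ∈ A) :
    (Ideal.span ((fun s => monomial s (1 : K)) '' (hibiExp '' A))).colon
        (Ideal.span {monomial (hibiExp J) (1 : K)} : Set (MvPolynomial (P ⊕ P) K))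
      = Ideal.span (X '' (Sum.inr '' {q | Maximal (· ∈ J) q})) := by
  apply colon_span_monomial_eq_span_X
  · rintro _ ⟨q, hq, rfl⟩
    refine ⟨_, ⟨J.erase q, hA' _ (hJ.erase_of_maximal hq) ?_, rfl⟩, hibiExp_erase_le J q⟩
    exact card_erase_lt_of_mem hq.prop
  · rintro _ ⟨J', hJ'A, rfl⟩ d hle
    obtain ⟨hJ', hne, hcard⟩ := hA J' hJ'A
    have hsub : ¬ J ⊆ J' := fun h => hne (eq_of_subset_of_card_le h hcard).symm
    obtain ⟨q, hq, hqJ'⟩ := hJ'.exists_maximal_notMem hsub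
    exact ⟨_, ⟨q, hq, rfl⟩, single_inr_le_of_hibiExp_le hle hq.prop hqJ'⟩

end Hibi

theorem colon_span_hibiExp_prefix_eq_span_X (K : Type*) [Field K] {P : Type*} [PartialOrder P]
    [Fintype P] [DecidableEq P] {L : List (Finset P)} (hL : L.Nodup)
    (hmem : ∀ J, J ∈ L ↔ IsLowerSet (J : Set P)) (hsorted : L.Pairwise (fun J J' => #J ≤ #J'))
    (ℓ : Fin L.length) :
    (Ideal.span ((fun s => monomial s (1 : K)) '' ((hibiExp ∘ L.get) '' Set.Iio ℓ))).colon
        (Ideal.span {monomial ((hibiExp ∘ L.get) ℓ) (1 : K)} : Set (MvPolynomial (P ⊕ P) K))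
      = Ideal.span (X '' (Sum.inr '' {q | Maximal (· ∈ L.get ℓ) q})) := by
  have hsorted' := List.pairwise_iff_get.1 hsorted
  rw [Set.image_comp]
  apply colon_span_hibiExp_eq_span_X K ((hmem _).1 (L.get_mem ℓ))
  · rintro _ ⟨k, hk, rfl⟩
    exact ⟨(hmem _).1 (L.get_mem k), fun h => (Set.mem_Iio.1 hk).ne (hL.get_inj_iff.1 h),
      hsorted' k ℓ hk⟩
  · intro J' hJ' hcard
    obtain ⟨k, rfl⟩ := List.mem_iff_get.1 ((hmem J').2 hJ')
    refine ⟨k, Set.mem_Iio.2 (lt_of_not_ge fun hle => ?_), rfl⟩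
    rcases hle.eq_or_lt with rfl | hlt
    · exact hcard.false
    · exact (hsorted' ℓ k hlt).not_gt hcard

/-- The Hibi ideal of a finite poset has linear quotients. -/
theorem stmt14 (K : Type*) [Field K] (P : Type*) [PartialOrder P] [Fintype P]
    [DecidableEq P] :
    HasLinearQuotients (hibiIdeal K P) := by
  classical
  obtain ⟨L, hL, hmem, hsorted⟩ :=
    (univ.filter fun J : Finset P => IsLowerSet (J : Set P)).exists_list_nodup_pairwise_le card
  replace hmem : ∀ J, J ∈ L ↔ IsLowerSet (J : Set P) := by simpa using hmem
  refine hasLinearQuotients_of_injective (hibiExp ∘ L.get)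
    (hibiExp_injective.comp (List.nodup_iff_injective_get.1 hL)) (fun e => ?_)
    fun ℓ => ⟨_, colon_span_hibiExp_prefix_eq_span_X K hL hmem hsorted ℓ⟩
  rw [isMinGen_hibiIdeal_iff, Set.range_comp, Set.range_list_get]
  simp [hmem]
end

section
/- Let (P,⪰) be a finite poset on {p_1,…,p_n}, K a field, and ℓ ≥ 1. Then every minimal monomial generator of H_P^ℓ ⊂ S = K[x_1,…,x_n,y_1,…,y_n] possesses a unique expression of the form u_{𝓘_1}u_{𝓘_2}⋯u_{𝓘_ℓ} with 𝓘_1 ⊆ 𝓘_2 ⊆ ⋯ ⊆ 𝓘_ℓ, where each 𝓘_k is a poset ideal of P. -/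
open Finset MvPolynomial

noncomputable def wgt {Q : Type*} [Fintype Q] [DecidableEq Q] (J : Finset Q) : (Q ⊕ Q) →₀ ℕ :=
  (∑ q ∈ J, Finsupp.single (Sum.inl q) 1) + ∑ q ∈ Jᶜ, Finsupp.single (Sum.inr q) 1

lemma wgt_inl {Q : Type*} [Fintype Q] [DecidableEq Q] (J : Finset Q) (p : Q) :
    wgt J (Sum.inl p) = if p ∈ J then 1 else 0 := by
  simp [wgt, Finsupp.finset_sum_apply, Finsupp.single_apply, Sum.inl.injEq]

lemma wgt_inr {Q : Type*} [Fintype Q] [DecidableEq Q] (J : Finset Q) (p : Q) :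
    wgt J (Sum.inr p) = if p ∈ J then 0 else 1 := by
  simp [wgt, Finsupp.finset_sum_apply, Finsupp.single_apply, Sum.inr.injEq]

lemma hibiGen_eq (K : Type*) [Field K] (Q : Type*) [Fintype Q] [DecidableEq Q] (J : Finset Q) :
    hibiGen K Q J = monomial (wgt J) 1 := by
  have h1 : ∏ q ∈ J, (X (Sum.inl q) : MvPolynomial (Q ⊕ Q) K)
      = monomial (∑ q ∈ J, Finsupp.single (Sum.inl q) 1) 1 := by
    rw [monomial_sum_one]; rfl
  have h2 : ∏ q ∈ Jᶜ, (X (Sum.inr q) : MvPolynomial (Q ⊕ Q) K)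
      = monomial (∑ q ∈ Jᶜ, Finsupp.single (Sum.inr q) 1) 1 := by
    rw [monomial_sum_one]; rfl
  rw [hibiGen, h1, h2, monomial_mul, mul_one, wgt]

def lowSums (P : Type*) [PartialOrder P] [Fintype P] [DecidableEq P] (ℓ : ℕ) :
    Set ((P ⊕ P) →₀ ℕ) :=
  {e | ∃ I : Fin ℓ → Finset P, (∀ k, IsLowerSet (↑(I k) : Set P)) ∧ e = ∑ k, wgt (I k)}

open Pointwise in
set_option maxHeartbeats 1000000 in
lemma hibiIdeal_pow_eq (K : Type*) [Field K] (P : Type*) [PartialOrder P] [Fintype P]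
    [DecidableEq P] (ℓ : ℕ) :
    hibiIdeal K P ^ ℓ
      = Ideal.span ((fun s => monomial s (1 : K)) '' lowSums P ℓ) := by
  have hbase : hibiIdeal K P
      = Ideal.span ((fun s => monomial s (1 : K)) '' {w | ∃ J : Finset P, IsLowerSet (↑J : Set P) ∧ w = wgt J}) := by
    rw [hibiIdeal]
    congr 1
    ext m
    constructor
    · rintro ⟨J, hJ, rfl⟩
      exact ⟨wgt J, ⟨J, hJ, rfl⟩, (hibiGen_eq K P J).symm⟩
    · rintro ⟨w, ⟨J, hJ, rfl⟩, rfl⟩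
      exact ⟨J, hJ, (hibiGen_eq K P J).symm⟩
  induction ℓ with
  | zero =>
    rw [pow_zero]
    have : lowSums P 0 = {0} := by
      ext w
      constructor
      · rintro ⟨I, _, rfl⟩; simp
      · rintro rfl
        exact ⟨fun k => ∅, fun k => by simp [isLowerSet_empty], by simp⟩
    rw [this]
    simp [Ideal.one_eq_top, Ideal.span_singleton_one, Ideal.eq_top_iff_one,
      Ideal.mem_span_singleton]
  | succ m ih =>
    rw [pow_succ, ih, hbase]
    apply le_antisymm
    · rw [Ideal.span_mul_span', Ideal.span_le]
      refine Set.mul_subset_iff.2 ?_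
      rintro _ ⟨a, ⟨I, hI, rfl⟩, rfl⟩ _ ⟨b, ⟨J, hJ, rfl⟩, rfl⟩
      apply Ideal.subset_span
      have hlow : ∀ k, IsLowerSet (↑(Fin.snoc (α := fun _ => Finset P) I J k) : Set P) := by
        intro k
        induction k using Fin.lastCases with
        | last => simpa using hJ
        | cast i => simpa using hI i
      have hmem : (∑ k : Fin (m+1), wgt (Fin.snoc (α := fun _ => Finset P) I J k))
          ∈ lowSums P (m+1) := by
        rw [lowSums, Set.mem_setOf_eq]
        exact ⟨Fin.snoc I J, hlow, rfl⟩
      rw [Set.mem_image]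
      refine ⟨_, hmem, ?_⟩
      rw [Fin.sum_univ_castSucc]
      simp only [Fin.snoc_castSucc, Fin.snoc_last]
      rw [monomial_mul, mul_one]
    · rw [Ideal.span_le]
      rintro _ ⟨w, ⟨I, hI, rfl⟩, rfl⟩
      have : (fun s => monomial s (1:K)) (∑ k, wgt (I k))
          = monomial (∑ k : Fin m, wgt (I k.castSucc)) 1 * monomial (wgt (I (Fin.last m))) 1 := by
        rw [monomial_mul, mul_one, Fin.sum_univ_castSucc]
      rw [this]
      exact Ideal.mul_mem_mul
        (Ideal.subset_span ⟨_, ⟨fun k => I k.castSucc, fun k => hI _, rfl⟩, rfl⟩)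
        (Ideal.subset_span ⟨_, ⟨I (Fin.last m), hI _, rfl⟩, rfl⟩)

lemma up_mem_iff {ℓ : ℕ} (S : Finset (Fin ℓ))
    (hS : ∀ ⦃a b : Fin ℓ⦄, a ≤ b → a ∈ S → b ∈ S) (k : Fin ℓ) :
    k ∈ S ↔ ℓ ≤ S.card + ↑k := by
  constructor
  · intro hk
    have h1 : Finset.Ici k ⊆ S := fun a ha => hS (Finset.mem_Ici.1 ha) hk
    have h2 := Finset.card_le_card h1
    rw [Fin.card_Ici] at h2
    have := k.isLt
    omega
  · intro h
    by_contra hk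
    have h1 : S ⊆ Finset.Ioi k := by
      intro a ha
      rw [Finset.mem_Ioi]
      rcases lt_or_ge k a with h' | h'
      · exact h'
      · exact absurd (hS h' ha) hk
    have h2 := Finset.card_le_card h1
    rw [Fin.card_Ioi] at h2
    have := k.isLt
    omega

lemma card_filter_threshold {ℓ c : ℕ} (hc : c ≤ ℓ) :
    ((univ : Finset (Fin ℓ)).filter (fun k : Fin ℓ => ℓ ≤ c + ↑k)).card = c := by
  rcases Nat.eq_zero_or_pos c with rfl | hpos
  · rw [Finset.card_eq_zero]
    ext k
    simp only [Finset.mem_filter, Finset.mem_univ, true_and, Finset.notMem_empty, iff_false]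
    have := k.isLt
    omega
  · have hlt : ℓ - c < ℓ := by omega
    have heq : (univ : Finset (Fin ℓ)).filter (fun k : Fin ℓ => ℓ ≤ c + ↑k)
        = Finset.Ici (⟨ℓ - c, hlt⟩ : Fin ℓ) := by
      ext k
      simp only [Finset.mem_filter, Finset.mem_univ, true_and, Finset.mem_Ici, Fin.le_def]
      omega
    rw [heq, Fin.card_Ici]
    show ℓ - (ℓ - c) = c
    omega

lemma sum_wgt_inl {P : Type*} [PartialOrder P] [Fintype P] [DecidableEq P] {ℓ : ℕ}
    (I : Fin ℓ → Finset P) (q : P) :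
    (∑ k, wgt (I k)) (Sum.inl q) = ((univ : Finset (Fin ℓ)).filter (fun k => q ∈ I k)).card := by
  rw [Finsupp.finset_sum_apply, Finset.card_filter]
  exact Finset.sum_congr rfl fun k _ => wgt_inl (I k) q

lemma sum_wgt_inr {P : Type*} [PartialOrder P] [Fintype P] [DecidableEq P] {ℓ : ℕ}
    (I : Fin ℓ → Finset P) (q : P) :
    (∑ k, wgt (I k)) (Sum.inr q) = ((univ : Finset (Fin ℓ)).filter (fun k => q ∉ I k)).card := by
  rw [Finsupp.finset_sum_apply, Finset.card_filter]
  refine Finset.sum_congr rfl fun k _ => ?_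
  rw [wgt_inr]
  by_cases h : q ∈ I k <;> simp [h]

lemma prod_hibiGen (K : Type*) [Field K] (P : Type*) [PartialOrder P] [Fintype P]
    [DecidableEq P] {ℓ : ℕ} (I : Fin ℓ → Finset P) :
    ∏ k : Fin ℓ, hibiGen K P (I k) = monomial (∑ k, wgt (I k)) 1 := by
  rw [monomial_sum_one]
  exact Finset.prod_congr rfl fun k _ => hibiGen_eq K P (I k)

/-- Every minimal monomial generator of `H_P^ℓ` possesses a unique expression of the form
`u_{𝓘_1}u_{𝓘_2}⋯u_{𝓘_ℓ}` with `𝓘_1 ⊆ 𝓘_2 ⊆ ⋯ ⊆ 𝓘_ℓ` a chain of poset ideals of `P`. -/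
theorem stmt16 (K : Type*) [Field K] (P : Type*) [PartialOrder P] [Fintype P]
    [DecidableEq P] (ℓ : ℕ) (hℓ : 1 ≤ ℓ)
    (e : (P ⊕ P) →₀ ℕ) (he : IsMinGen (hibiIdeal K P ^ ℓ) e) :
    ∃! I : {I : Fin ℓ → Finset P // Monotone I ∧ ∀ k, IsLowerSet (↑(I k) : Set P)},
      (monomial e (1 : K) : MvPolynomial (P ⊕ P) K) = ∏ k : Fin ℓ, hibiGen K P (I.1 k) := by
  classical
  obtain ⟨hmem, hmin⟩ := he
  rw [hibiIdeal_pow_eq, mem_ideal_span_monomial_image] at hmem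
  obtain ⟨s, hsS, hse⟩ := hmem e (by rw [support_monomial]; simp)
  have hs_mem : (monomial s (1 : K) : MvPolynomial (P ⊕ P) K) ∈ hibiIdeal K P ^ ℓ := by
    rw [hibiIdeal_pow_eq]
    exact Ideal.subset_span ⟨s, hsS, rfl⟩
  obtain rfl := (hmin s hs_mem hse).symm
  obtain ⟨I, hI, hE⟩ := hsS
  have hinl : ∀ q, e (Sum.inl q)
      = ((univ : Finset (Fin ℓ)).filter (fun k => q ∈ I k)).card := by
    intro q; rw [hE, sum_wgt_inl]
  have hsum : ∀ q, e (Sum.inl q) ≤ ℓ := by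
    intro q
    rw [hinl q]
    calc ((univ : Finset (Fin ℓ)).filter (fun k => q ∈ I k)).card
        ≤ (univ : Finset (Fin ℓ)).card := Finset.card_le_card (Finset.filter_subset _ _)
      _ = ℓ := by simp
  have hmono_e : ∀ {q q' : P}, q' ≤ q → e (Sum.inl q) ≤ e (Sum.inl q') := by
    intro q q' hqq
    rw [hinl q, hinl q']
    apply Finset.card_le_card
    intro k hk
    rw [Finset.mem_filter] at hk ⊢
    exact ⟨hk.1, hI k hqq hk.2⟩
  have hlr : ∀ q, e (Sum.inl q) + e (Sum.inr q) = ℓ := by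
    intro q
    rw [hE, sum_wgt_inl, sum_wgt_inr]
    rw [Finset.card_filter_add_card_filter_not]
    simp
  set J : Fin ℓ → Finset P :=
    fun k => univ.filter (fun q => ℓ ≤ e (Sum.inl q) + ↑k) with hJdef
  have hmemJ : ∀ (k : Fin ℓ) (q : P), q ∈ J k ↔ ℓ ≤ e (Sum.inl q) + ↑k := by
    intro k q; simp [hJdef]
  have hJlow : ∀ k, IsLowerSet (↑(J k) : Set P) := by
    intro k a b hba ha
    rw [Finset.mem_coe, hmemJ] at ha ⊢
    have := hmono_e hba
    omega
  have hJmono : Monotone J := by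
    intro k k' hkk
    rw [Finset.le_iff_subset]
    intro q hq
    rw [hmemJ] at hq ⊢
    have : (k : ℕ) ≤ (k' : ℕ) := hkk
    omega
  have hcardJ : ∀ q, ((univ : Finset (Fin ℓ)).filter (fun k => q ∈ J k)).card
      = e (Sum.inl q) := by
    intro q
    have hfe : (univ : Finset (Fin ℓ)).filter (fun k => q ∈ J k)
        = (univ : Finset (Fin ℓ)).filter (fun k : Fin ℓ => ℓ ≤ e (Sum.inl q) + ↑k) :=
      Finset.filter_congr fun k _ => by rw [hmemJ]
    rw [hfe, card_filter_threshold (hsum q)]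
  have hEJ : e = ∑ k, wgt (J k) := by
    ext v
    cases v with
    | inl q => rw [sum_wgt_inl, hcardJ]
    | inr q =>
      rw [sum_wgt_inr]
      have h2 := Finset.card_filter_add_card_filter_not
        (s := (univ : Finset (Fin ℓ))) (p := fun k => q ∈ J k)
      rw [Finset.card_univ, Fintype.card_fin, hcardJ] at h2
      have h1 := hlr q
      omega
  refine ⟨⟨J, hJmono, hJlow⟩, ?_, ?_⟩
  · show (monomial e (1 : K) : MvPolynomial (P ⊕ P) K) = ∏ k : Fin ℓ, hibiGen K P (J k)
    rw [prod_hibiGen, ← hEJ]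
  · rintro ⟨I', hmono', hlow'⟩ hprod'
    replace hprod' : (monomial e (1 : K) : MvPolynomial (P ⊕ P) K)
        = ∏ k : Fin ℓ, hibiGen K P (I' k) := hprod'
    rw [prod_hibiGen] at hprod'
    have hEI : e = ∑ k, wgt (I' k) := monomial_left_injective one_ne_zero hprod'
    apply Subtype.ext
    funext k
    ext q
    rw [hmemJ]
    have hup : ∀ ⦃a b : Fin ℓ⦄, a ≤ b → a ∈ (univ : Finset (Fin ℓ)).filter (fun k => q ∈ I' k)
        → b ∈ (univ : Finset (Fin ℓ)).filter (fun k => q ∈ I' k) := by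
      intro a b hab ha
      rw [Finset.mem_filter] at ha ⊢
      exact ⟨Finset.mem_univ _, hmono' hab ha.2⟩
    have h4 : e (Sum.inl q) = ((univ : Finset (Fin ℓ)).filter (fun k => q ∈ I' k)).card := by
      rw [hEI, sum_wgt_inl]
    have h5 := up_mem_iff _ hup k
    rw [Finset.mem_filter, ← h4] at h5
    simpa using h5
end

section
/- Let I ⊂ S = K[x_1,…,x_n] be a monomial ideal with minimal monomial generating set G(I) = {u_1,…,u_m}. Then I has linear quotients with admissible order u_1 > u_2 > ⋯ > u_m if and only if the polarization I^℘ has linear quotients with admissible order u_1^℘ > u_2^℘ > ⋯ > u_m^℘; that is, all colon ideals (u_1,…,u_{ℓ−1}) : u_ℓ (2 ≤ ℓ ≤ m) are generated by variables if and only if all colon ideals (u_1^℘,…,u_{ℓ−1}^℘) : u_ℓ^℘ (2 ≤ ℓ ≤ m) are generated by variables. -/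
/-!
Both colon ideals are monomial ideals, so "generated by variables" is a statement about
exponent vectors: `(x^w : w ∈ U) : x^v` is generated by variables iff every `w ∈ U` has a
coordinate `i` with `v i < w i` such that `x^v x_i` already lies in `(x^w : w ∈ U)`.
Polarization is an order embedding of exponent vectors with `(v + eᵢ)^℘ = v^℘ + e_(i, v i)`,
and conversely `w^℘ ≤ v^℘ + e_(i, j)` forces `w ≤ v + eᵢ`, so this criterion holds for
`U, v` iff it holds for `U^℘, v^℘`.
-/

open Finset MvPolynomial

/-- The polarization of the monomial `x^u = x_1^{u 1}⋯x_n^{u n}`: the squarefree monomial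
`∏_i x_{i,1}x_{i,2}⋯x_{i,u i}` in the polynomial ring on doubly indexed variables. -/
noncomputable def polMon (K : Type*) [Field K] {n : ℕ} (u : Fin n →₀ ℕ) :
    MvPolynomial (Fin n × ℕ) K :=
  ∏ i : Fin n, ∏ j ∈ Finset.range (u i), X (i, j)

section ColonByMonomial

variable {R σ : Type*} [CommSemiring R]

theorem mem_colon_span_monomial_iff (U : Set (σ →₀ ℕ)) (v : σ →₀ ℕ) (p : MvPolynomial σ R) :
    p ∈ (Ideal.span ((fun s => monomial s (1 : R)) '' U)).colon
        (Ideal.span {monomial v (1 : R)}) ↔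
      ∀ a ∈ p.support, ∃ w ∈ U, w ≤ a + v := by
  rw [Ideal.mem_colon_span_singleton, mem_ideal_span_monomial_image]
  constructor
  · intro h a ha
    exact h (a + v) (by rwa [mem_support_iff, coeff_mul_monomial, mul_one, ← mem_support_iff])
  · intro h b hb
    rw [mem_support_iff, coeff_mul_monomial'] at hb
    split_ifs at hb with hvb
    · obtain ⟨w, hw, hle⟩ := h (b - v) (mem_support_iff.mpr (by rwa [mul_one] at hb))
      exact ⟨w, hw, by rwa [tsub_add_cancel_of_le hvb] at hle⟩
    · exact absurd rfl hb

theorem colon_span_monomial_eq_span_X_iff [Nontrivial R] (U : Set (σ →₀ ℕ)) (v : σ →₀ ℕ)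
    (T : Set σ) :
    (Ideal.span ((fun s => monomial s (1 : R)) '' U)).colon
        (Ideal.span {monomial v (1 : R)}) = Ideal.span (X '' T) ↔
      ∀ a : σ →₀ ℕ, (∃ w ∈ U, w ≤ a + v) ↔ ∃ i ∈ T, a i ≠ 0 := by
  classical
  constructor
  · intro h a
    have := SetLike.ext_iff.mp h (monomial a (1 : R))
    rw [mem_colon_span_monomial_iff, mem_ideal_span_X_image] at this
    simpa [support_monomial] using this
  · intro h
    ext p
    rw [mem_colon_span_monomial_iff, mem_ideal_span_X_image]
    exact forall₂_congr fun a _ => h a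

end ColonByMonomial

section LinearColon

variable {R σ : Type*}

/-- Exponent form of "`(x^w : w ∈ U) : x^v` is generated by variables",
see `exists_colon_eq_span_X_iff`. -/
def HasLinearColon (U : Set (σ →₀ ℕ)) (v : σ →₀ ℕ) : Prop :=
  ∀ w ∈ U, ∃ i, v i < w i ∧ ∃ w' ∈ U, w' ≤ v + Finsupp.single i 1

theorem hasLinearColon_iff_exists (U : Set (σ →₀ ℕ)) (v : σ →₀ ℕ) :
    HasLinearColon U v ↔
      ∃ T : Set σ, ∀ a : σ →₀ ℕ, (∃ w ∈ U, w ≤ a + v) ↔ ∃ i ∈ T, a i ≠ 0 := by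
  constructor
  · intro h
    refine ⟨{i | ∃ w' ∈ U, w' ≤ v + Finsupp.single i 1}, fun a => ⟨?_, ?_⟩⟩
    · rintro ⟨w, hw, hle⟩
      obtain ⟨i, hlt, hi⟩ := h w hw
      have := hle i
      exact ⟨i, hi, by simp only [Finsupp.add_apply] at this; omega⟩
    · rintro ⟨i, ⟨w', hw', hle⟩, ha⟩
      refine ⟨w', hw', hle.trans ?_⟩
      rw [add_comm a]
      exact add_le_add_right (Finsupp.single_le_iff.mpr (Nat.one_le_iff_ne_zero.mpr ha)) v
  · rintro ⟨T, hT⟩ w hw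
    obtain ⟨i, hiT, hi⟩ := (hT (w - v)).mp ⟨w, hw, le_tsub_add⟩
    obtain ⟨w', hw', hle⟩ := (hT (Finsupp.single i 1)).mpr ⟨i, hiT, by simp⟩
    refine ⟨i, ?_, w', hw', by rwa [add_comm] at hle⟩
    rw [Finsupp.tsub_apply] at hi
    omega

theorem exists_colon_eq_span_X_iff [CommSemiring R] [Nontrivial R] (U : Set (σ →₀ ℕ))
    (v : σ →₀ ℕ) :
    (∃ T : Set σ, (Ideal.span ((fun s => monomial s (1 : R)) '' U)).colon
        (Ideal.span {monomial v (1 : R)}) = Ideal.span (X '' T)) ↔ HasLinearColon U v := by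
  simp only [colon_span_monomial_eq_span_X_iff, hasLinearColon_iff_exists]

end LinearColon

section Polarize

variable {σ : Type*} [Fintype σ]

noncomputable def polarize (w : σ →₀ ℕ) : σ × ℕ →₀ ℕ :=
  ∑ i, ∑ j ∈ range (w i), Finsupp.single (i, j) 1

theorem polarize_apply (w : σ →₀ ℕ) (i : σ) (j : ℕ) :
    polarize w (i, j) = if j < w i then 1 else 0 := by
  classical
  simp only [polarize, Finsupp.finsetSum_apply, Finsupp.single_apply, Prod.mk.injEq]
  rw [Finset.sum_eq_single i (fun b _ hb => by simp [hb]) (by simp)]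
  simp [Finset.sum_ite_eq']

theorem polMon_eq_monomial_polarize (K : Type*) [Field K] {n : ℕ} (w : Fin n →₀ ℕ) :
    polMon K w = monomial (polarize w) 1 := by
  simp only [polMon, polarize, X, monomial_sum_one]

theorem polarize_le_iff (w : σ →₀ ℕ) (x : σ × ℕ →₀ ℕ) :
    polarize w ≤ x ↔ ∀ i, ∀ j < w i, x (i, j) ≠ 0 := by
  refine ⟨fun h i j hj => ?_, fun h ⟨i, j⟩ => ?_⟩
  · have := h (i, j)
    simp only [polarize_apply, if_pos hj] at this
    omega
  · have := h i j
    simp only [polarize_apply]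
    split_ifs <;> omega

theorem polarize_le_polarize_iff {v w : σ →₀ ℕ} : polarize w ≤ polarize v ↔ w ≤ v := by
  rw [polarize_le_iff, Finsupp.le_def]
  simp only [polarize_apply]
  refine forall_congr' fun i => ⟨fun h => ?_, fun h j hj => ?_⟩
  · by_contra hlt
    simpa using h (v i) (by omega)
  · simp only [ne_eq, ite_eq_right_iff]
    omega

theorem polarize_add_single [DecidableEq σ] (v : σ →₀ ℕ) (i : σ) :
    polarize (v + Finsupp.single i 1) = polarize v + Finsupp.single (i, v i) 1 := by
  ext ⟨i', j⟩
  simp only [Finsupp.add_apply, polarize_apply, Finsupp.single_apply, Prod.mk.injEq]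
  split_ifs <;> grind

theorem le_add_single_of_polarize_le {v w : σ →₀ ℕ} {i : σ} {j : ℕ}
    (h : polarize w ≤ polarize v + Finsupp.single (i, j) 1) :
    w ≤ v + Finsupp.single i 1 := by
  classical
  rw [polarize_le_iff] at h
  intro i'
  -- a single extra box cannot cover both `(i', v i')` and `(i', v i' + 1)`
  have h₀ := h i' (v i')
  have h₁ := h i' (v i' + 1)
  simp only [Finsupp.add_apply, polarize_apply, Finsupp.single_apply, Prod.mk.injEq] at h₀ h₁ ⊢
  split_ifs at h₀ h₁ ⊢ <;> grind

theorem hasLinearColon_polarize_iff (U : Set (σ →₀ ℕ)) (v : σ →₀ ℕ) :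
    HasLinearColon (polarize '' U) (polarize v) ↔ HasLinearColon U v := by
  classical
  simp only [HasLinearColon, Set.forall_mem_image, Set.exists_mem_image]
  refine forall₂_congr fun w _ => ⟨?_, ?_⟩
  · rintro ⟨⟨i, j⟩, hlt, w', hw', hle⟩
    have hvw : v i < w i := by
      simp only [polarize_apply] at hlt
      split_ifs at hlt <;> omega
    exact ⟨i, hvw, w', hw', le_add_single_of_polarize_le hle⟩
  · rintro ⟨i, hlt, w', hw', hle⟩
    refine ⟨(i, v i), by simp [polarize_apply, hlt], w', hw', ?_⟩
    rwa [← polarize_add_single, polarize_le_polarize_iff]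

end Polarize

theorem stmt17_general (K : Type*) [Field K] (n m : ℕ) (u : Fin m → (Fin n →₀ ℕ)) :
    ((∀ ℓ : Fin m, ∃ T : Set (Fin n),
        Submodule.colon
            (Ideal.span {p : MvPolynomial (Fin n) K |
              ∃ k, k < ℓ ∧ p = monomial (u k) (1 : K)})
            (Ideal.span {monomial (u ℓ) (1 : K)})
          = Ideal.span ((fun i => (X i : MvPolynomial (Fin n) K)) '' T)) ↔
     (∀ ℓ : Fin m, ∃ T : Set (Fin n × ℕ),
        Submodule.colon
            (Ideal.span {p : MvPolynomial (Fin n × ℕ) K |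
              ∃ k, k < ℓ ∧ p = polMon K (u k)})
            (Ideal.span {polMon K (u ℓ)})
          = Ideal.span ((fun v => (X v : MvPolynomial (Fin n × ℕ) K)) '' T))) := by
  have gens (ℓ : Fin m) :
      {p : MvPolynomial (Fin n) K | ∃ k, k < ℓ ∧ p = monomial (u k) 1} =
        (fun s => monomial s 1) '' (u '' Set.Iio ℓ) := by
    ext; simp [eq_comm]
  have polGens (ℓ : Fin m) :
      {p : MvPolynomial (Fin n × ℕ) K | ∃ k, k < ℓ ∧ p = polMon K (u k)} =
        (fun s => monomial s 1) '' (polarize '' (u '' Set.Iio ℓ)) := by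
    ext; simp [polMon_eq_monomial_polarize, eq_comm]
  refine forall_congr' fun ℓ => ?_
  rw [gens, polGens, polMon_eq_monomial_polarize, exists_colon_eq_span_X_iff,
    exists_colon_eq_span_X_iff, hasLinearColon_polarize_iff]

/-- A monomial ideal `I` with minimal monomial generating set `{x^{u 1}, …, x^{u m}}`
(no generator divides another) has linear quotients with admissible order
`u 1 > u 2 > ⋯ > u m` if and only if its polarization `I^℘` has linear quotients with
admissible order `(u 1)^℘ > ⋯ > (u m)^℘`: all colon ideals `(u_1,…,u_{ℓ−1}) : u_ℓ` are
generated by subsets of the variables iff the same holds for the polarized colon ideals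
`(u_1^℘,…,u_{ℓ−1}^℘) : u_ℓ^℘`. -/
theorem stmt17 (K : Type*) [Field K] (n m : ℕ) (u : Fin m → (Fin n →₀ ℕ))
    (hmin : ∀ k j : Fin m, k ≠ j → ¬ u k ≤ u j) :
    ((∀ ℓ : Fin m, ∃ T : Set (Fin n),
        Submodule.colon
            (Ideal.span {p : MvPolynomial (Fin n) K |
              ∃ k, k < ℓ ∧ p = monomial (u k) (1 : K)})
            (Ideal.span {monomial (u ℓ) (1 : K)})
          = Ideal.span ((fun i => (X i : MvPolynomial (Fin n) K)) '' T)) ↔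
     (∀ ℓ : Fin m, ∃ T : Set (Fin n × ℕ),
        Submodule.colon
            (Ideal.span {p : MvPolynomial (Fin n × ℕ) K |
              ∃ k, k < ℓ ∧ p = polMon K (u k)})
            (Ideal.span {polMon K (u ℓ)})
          = Ideal.span ((fun v => (X v : MvPolynomial (Fin n × ℕ) K)) '' T))) :=
  stmt17_general K n m u
end
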